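/- The Wronskian polynomial W satisfies W(0) = 1, −W′(0) = Σ_{n=1}^N ω_n, and −W″(0) = Σ_{n=1}^N Σ_{k=1}^N ( e^{−|x_n − x_k|} − 1 ) ω_n ω_k + 2 Σ_{n=1}^N υ_n. -/

import Mathlib

/-!
Between consecutive points every solution of `f'' = f / 4` is `A e^{t/2} + B e^{-t/2}`, and the
transfer matrices `Tmat` leave the pair `(A, B)` unchanged. The jump at `x_n` updates `(A, B)`
linearly with coefficients in `c_n = z ω_n + z² υ_n`, so starting from `(1, 0)` both become
polynomials in `z`, and `W = A_N`. Since every `c_n` vanishes at `z = 0`, the coefficients of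
`A_N, B_N` up to order two obey short recursions that unwind to explicit sums; for ordered points
`e^{x_j - x_k} = e^{-|x_j - x_k|}` for `j < k`, which symmetrizes the double sum.
-/

open scoped BigOperators

/-- Transfer matrix across an interval of length `d` for `-f'' + (1/4) f = 0`. -/
noncomputable def Tmat (d : ℝ) : Matrix (Fin 2) (Fin 2) ℂ :=
  !![Complex.cosh ((d : ℂ) / 2), 2 * Complex.sinh ((d : ℂ) / 2);
     (1 / 2) * Complex.sinh ((d : ℂ) / 2), Complex.cosh ((d : ℂ) / 2)]

/-- Interface matrix at a point carrying weight `w` and dipole `v`. -/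
noncomputable def Omat (w v : ℝ) (z : ℂ) : Matrix (Fin 2) (Fin 2) ℂ :=
  !![1, 0; -(z * (w : ℂ) + z ^ 2 * (v : ℂ)), 1]

/-- The value `(φ₋(z, x_N+), φ₋'(z, x_N+))` obtained by propagating the initial data
`(e^{x_0/2}, (1/2) e^{x_0/2})` through all the point interactions (0-indexed data). -/
noncomputable def transVec (N : ℕ) (x w v : ℕ → ℝ) (z : ℂ) : Fin 2 → ℂ :=
  Matrix.mulVec
    ((((List.range (N - 1)).reverse.map
        (fun j => Omat (w (j + 1)) (v (j + 1)) z * Tmat (x (j + 1) - x j))).prod)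
      * Omat (w 0) (v 0) z)
    ![Complex.exp ((x 0 : ℂ) / 2), (1 / 2) * Complex.exp ((x 0 : ℂ) / 2)]

/-- The Wronskian polynomial `W(z)` of the generalized spectral problem
`-f'' + (1/4) f = z ω f + z² υ f` (`W ≡ 1` when `N = 0`). -/
noncomputable def Wron (N : ℕ) (x w v : ℕ → ℝ) (z : ℂ) : ℂ :=
  if N = 0 then 1
  else Complex.exp (-(x (N - 1) : ℂ) / 2) *
    (transVec N x w v z 1 + (1 / 2) * transVec N x w v z 0)

/-- The Weyl--Titchmarsh function `M(z)`. -/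
noncomputable def WeylM (N : ℕ) (x w v : ℕ → ℝ) (z : ℂ) : ℂ :=
  Complex.exp ((x (N - 1) : ℂ) / 2) *
    ((1 / 2) * transVec N x w v z 0 - transVec N x w v z 1) / Wron N x w v z

/-- `f` (with distributional derivative represented by `f'`) is a solution at `z` of the
generalized spectral problem `-f'' + (1/4) f = z ω f + z² υ f` with
`ω = Σ_{n<N} w n δ_{x n}`, `υ = Σ_{n<N} v n δ_{x n}`: it is continuous, twice differentiable
away from the points `x n` with `f'' = (1/4) f` there, and the one-sided limits of `f'` at
each `x n` exist and satisfy the jump condition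
`f'(x_n+) - f'(x_n-) = -(z w_n + z² v_n) f (x_n)`. -/
def IsSol (N : ℕ) (x w v : ℕ → ℝ) (z : ℂ) (f f' : ℝ → ℂ) : Prop :=
  Continuous f ∧
  (∀ t : ℝ, (∀ n < N, t ≠ x n) →
    HasDerivAt f (f' t) t ∧ HasDerivAt f' ((1 / 4) * f t) t) ∧
  (∀ n < N, ∃ L R : ℂ,
    Filter.Tendsto f' (nhdsWithin (x n) (Set.Iio (x n))) (nhds L) ∧
    Filter.Tendsto f' (nhdsWithin (x n) (Set.Ioi (x n))) (nhds R) ∧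
    R - L = -(z * (w n : ℂ) + z ^ 2 * (v n : ℂ)) * f (x n))

open scoped Polynomial

section Polynomial

variable {𝕜 : Type*} [NontriviallyNormedField 𝕜]

lemma Polynomial.deriv_eval_zero (p : 𝕜[X]) : deriv (fun z => p.eval z) 0 = p.coeff 1 := by
  rw [Polynomial.deriv, ← Polynomial.coeff_zero_eq_eval_zero, Polynomial.coeff_derivative]
  simp

lemma Polynomial.deriv_deriv_eval_zero (p : 𝕜[X]) :
    deriv (deriv fun z => p.eval z) 0 = 2 * p.coeff 2 := by
  have h : deriv (fun z => p.eval z) = fun z => p.derivative.eval z := by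
    ext z
    exact Polynomial.deriv p
  rw [h, Polynomial.deriv_eval_zero, Polynomial.coeff_derivative]
  norm_num
  ring

end Polynomial

open Polynomial
open scoped Matrix

/-- Value and derivative at `y` of `t ↦ A e^{t/2} + B e^{-t/2}`, the general solution of
`f'' = f / 4`. -/
noncomputable def solVec (A B : ℂ) (y : ℝ) : Fin 2 → ℂ :=
  ![A * Complex.exp (y / 2) + B * Complex.exp (-y / 2),
    (A * Complex.exp (y / 2) - B * Complex.exp (-y / 2)) / 2]

lemma Tmat_mulVec_solVec (d y : ℝ) (A B : ℂ) :
    Tmat d *ᵥ solVec A B y = solVec A B (y + d) := by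
  have hexp : ∀ s t : ℂ, Complex.exp ((s + t) / 2) = Complex.exp (s / 2) * Complex.exp (t / 2) :=
    fun s t => by rw [← Complex.exp_add]; ring_nf
  funext i
  fin_cases i <;>
    simp [solVec, Tmat, Matrix.mulVec, dotProduct, Fin.sum_univ_two, hexp,
      Complex.cosh, Complex.sinh, neg_div] <;> ring

lemma Omat_mulVec_solVec (w v : ℝ) (z A B : ℂ) (y : ℝ) :
    Omat w v z *ᵥ solVec A B y =
      solVec (A - (z * w + z ^ 2 * v) * (A + Complex.exp (-y) * B))
        (B + (z * w + z ^ 2 * v) * (Complex.exp y * A + B)) y := by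
  have h1 : Complex.exp (-y) = Complex.exp (-y / 2) * Complex.exp (-y / 2) := by
    rw [← Complex.exp_add]; ring_nf
  have h2 : Complex.exp y = Complex.exp (y / 2) * Complex.exp (y / 2) := by
    rw [← Complex.exp_add]; ring_nf
  have h3 : Complex.exp (y / 2) * Complex.exp (-y / 2) = 1 := by
    rw [← Complex.exp_add]; ring_nf; exact Complex.exp_zero
  funext i
  set c := (z : ℂ) * w + z ^ 2 * v
  fin_cases i
  · simp [solVec, Omat, Matrix.mulVec, dotProduct, Fin.sum_univ_two, h1, h2]
    linear_combination -c * (A * Complex.exp (y / 2) - B * Complex.exp (-y / 2)) * h3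
  · simp [solVec, Omat, Matrix.mulVec, dotProduct, Fin.sum_univ_two, h1, h2]
    linear_combination c * (A * Complex.exp (y / 2) + B * Complex.exp (-y / 2)) / 2 * h3

lemma solVec_one_zero (y : ℝ) :
    solVec 1 0 y = ![Complex.exp (y / 2), (1 / 2) * Complex.exp (y / 2)] := by
  funext i
  fin_cases i <;> simp [solVec, div_eq_inv_mul]

lemma exp_neg_half_mul_solVec (A B : ℂ) (y : ℝ) :
    Complex.exp (-y / 2) * (solVec A B y 1 + (1 / 2) * solVec A B y 0) = A := by
  have h : Complex.exp (-y / 2) * Complex.exp (y / 2) = 1 := by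
    rw [← Complex.exp_add]; ring_nf; exact Complex.exp_zero
  simp only [solVec, Matrix.cons_val_one, Matrix.cons_val_zero]
  linear_combination A * h

noncomputable def weightPoly (w v : ℝ) : ℂ[X] := C (w : ℂ) * X + C (v : ℂ) * X ^ 2

/-- After the first `n` points the solution is `A_n(z) e^{t/2} + B_n(z) e^{-t/2}`;
`solCoeffs x w v n = (A_n, B_n)`. -/
noncomputable def solCoeffs (x w v : ℕ → ℝ) : ℕ → ℂ[X] × ℂ[X]
  | 0 => (1, 0)
  | n + 1 =>
    ((solCoeffs x w v n).1 - weightPoly (w n) (v n) *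
        ((solCoeffs x w v n).1 + C (Complex.exp (-x n)) * (solCoeffs x w v n).2),
     (solCoeffs x w v n).2 + weightPoly (w n) (v n) *
        (C (Complex.exp (x n)) * (solCoeffs x w v n).1 + (solCoeffs x w v n).2))

noncomputable def transferMat (x w v : ℕ → ℝ) (z : ℂ) (n : ℕ) : Matrix (Fin 2) (Fin 2) ℂ :=
  ((List.range n).reverse.map
      (fun j => Omat (w (j + 1)) (v (j + 1)) z * Tmat (x (j + 1) - x j))).prod *
    Omat (w 0) (v 0) z

lemma transferMat_succ (x w v : ℕ → ℝ) (z : ℂ) (n : ℕ) :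
    transferMat x w v z (n + 1) =
      Omat (w (n + 1)) (v (n + 1)) z * Tmat (x (n + 1) - x n) * transferMat x w v z n := by
  simp [transferMat, List.range_succ, Matrix.mul_assoc]

lemma transferMat_mulVec_solVec (x w v : ℕ → ℝ) (z : ℂ) (n : ℕ) :
    transferMat x w v z n *ᵥ solVec 1 0 (x 0) =
      solVec ((solCoeffs x w v (n + 1)).1.eval z) ((solCoeffs x w v (n + 1)).2.eval z) (x n) := by
  induction n with
  | zero =>
    rw [transferMat, List.range_zero, List.reverse_nil, List.map_nil, List.prod_nil,
      Matrix.one_mul, Omat_mulVec_solVec]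
    simp [solCoeffs, weightPoly]
    ring_nf
  | succ n ih =>
    rw [transferMat_succ, ← Matrix.mulVec_mulVec, ← Matrix.mulVec_mulVec, ih,
      Tmat_mulVec_solVec, add_sub_cancel, Omat_mulVec_solVec]
    simp [solCoeffs, weightPoly]
    ring_nf

lemma Wron_eq_eval_solCoeffs (N : ℕ) (x w v : ℕ → ℝ) (z : ℂ) :
    Wron N x w v z = (solCoeffs x w v N).1.eval z := by
  rcases N with _ | n
  · simp [Wron, solCoeffs]
  · rw [Wron, if_neg n.succ_ne_zero, transVec, ← solVec_one_zero, Nat.add_sub_cancel,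
      ← transferMat, transferMat_mulVec_solVec, exp_neg_half_mul_solVec]

lemma weightPoly_mul_coeff (a b : ℝ) (p : ℂ[X]) :
    (weightPoly a b * p).coeff 0 = 0 ∧
    (weightPoly a b * p).coeff 1 = a * p.coeff 0 ∧
    (weightPoly a b * p).coeff 2 = a * p.coeff 1 + b * p.coeff 0 := by
  simp [weightPoly, add_mul, mul_assoc, coeff_X_mul, coeff_X_pow_mul']

section Coefficients

variable (x w v : ℕ → ℝ)

lemma solCoeffs_fst_coeff_zero (n : ℕ) : (solCoeffs x w v n).1.coeff 0 = 1 := by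
  induction n with
  | zero => simp [solCoeffs]
  | succ n ih => simp [solCoeffs, ih, (weightPoly_mul_coeff _ _ _).1]

lemma solCoeffs_snd_coeff_zero (n : ℕ) : (solCoeffs x w v n).2.coeff 0 = 0 := by
  induction n with
  | zero => simp [solCoeffs]
  | succ n ih => simp [solCoeffs, ih, (weightPoly_mul_coeff _ _ _).1]

lemma solCoeffs_fst_coeff_one (n : ℕ) :
    (solCoeffs x w v n).1.coeff 1 = -(∑ k ∈ Finset.range n, w k : ℝ) := by
  induction n with
  | zero => simp [solCoeffs, coeff_one]
  | succ n ih =>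
    simp [solCoeffs, ih, (weightPoly_mul_coeff _ _ _).2.1, solCoeffs_fst_coeff_zero,
      solCoeffs_snd_coeff_zero, Finset.sum_range_succ]
    ring

lemma solCoeffs_snd_coeff_one (n : ℕ) :
    (solCoeffs x w v n).2.coeff 1 = (∑ k ∈ Finset.range n, w k * Real.exp (x k) : ℝ) := by
  induction n with
  | zero => simp [solCoeffs]
  | succ n ih =>
    simp [solCoeffs, ih, (weightPoly_mul_coeff _ _ _).2.1, solCoeffs_fst_coeff_zero,
      solCoeffs_snd_coeff_zero, Finset.sum_range_succ]

lemma solCoeffs_fst_coeff_two (n : ℕ) :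
    (solCoeffs x w v n).1.coeff 2 = (∑ k ∈ Finset.range n,
      (∑ j ∈ Finset.range k, w k * w j * (1 - Real.exp (x j) * Real.exp (-x k)) - v k) : ℝ) := by
  induction n with
  | zero => simp [solCoeffs, coeff_one]
  | succ n ih =>
    have hstep : (solCoeffs x w v (n + 1)).1.coeff 2 = (solCoeffs x w v n).1.coeff 2 -
        (w n * ((solCoeffs x w v n).1.coeff 1 +
          Complex.exp (-x n) * (solCoeffs x w v n).2.coeff 1) + v n) := by
      simp [solCoeffs, (weightPoly_mul_coeff _ _ _).2.2, solCoeffs_fst_coeff_zero,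
        solCoeffs_snd_coeff_zero]
    have hnew : ∑ j ∈ Finset.range n, w n * w j * (1 - Real.exp (x j) * Real.exp (-x n)) =
        -(w n * (-∑ j ∈ Finset.range n, w j +
          Real.exp (-x n) * ∑ j ∈ Finset.range n, w j * Real.exp (x j))) := by
      simp only [Finset.mul_sum, ← Finset.sum_neg_distrib, ← Finset.sum_add_distrib]
      exact Finset.sum_congr rfl fun j _ => by ring
    rw [hstep, ih, solCoeffs_fst_coeff_one, solCoeffs_snd_coeff_one, Finset.sum_range_succ,
      hnew]
    push_cast
    ring

end Coefficients

lemma Finset.sum_range_sum_range_eq_diag_add_lt {M : Type*} [AddCommMonoid M] (N : ℕ)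
    (f : ℕ → ℕ → M) :
    ∑ n ∈ Finset.range N, ∑ k ∈ Finset.range N, f n k =
      ∑ n ∈ Finset.range N, (f n n + ∑ k ∈ Finset.range n, (f n k + f k n)) := by
  induction N with
  | zero => simp
  | succ N ih =>
    simp only [Finset.sum_range_succ, Finset.sum_add_distrib] at ih ⊢
    rw [ih]
    abel

lemma sum_exp_neg_abs_sub_mul_add (N : ℕ) (x w v : ℕ → ℝ)
    (hx : ∀ i j, i < j → j < N → x i < x j) :
    ∑ n ∈ Finset.range N, ∑ k ∈ Finset.range N, (Real.exp (-|x n - x k|) - 1) * w n * w k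
        + 2 * ∑ n ∈ Finset.range N, v n =
      -(2 * ∑ k ∈ Finset.range N,
        (∑ j ∈ Finset.range k, w k * w j * (1 - Real.exp (x j) * Real.exp (-x k)) - v k)) := by
  have hpair : ∀ k < N, ∀ j < k,
      (Real.exp (-|x k - x j|) - 1) * w k * w j + (Real.exp (-|x j - x k|) - 1) * w j * w k =
        -(2 * (w k * w j * (1 - Real.exp (x j) * Real.exp (-x k)))) := by
    intro k hk j hj
    rw [abs_sub_comm (x j), abs_of_pos (sub_pos.2 (hx j k hj hk)), neg_sub, Real.exp_sub,
      Real.exp_neg]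
    ring
  rw [Finset.sum_range_sum_range_eq_diag_add_lt, Finset.mul_sum, Finset.mul_sum,
    ← Finset.sum_add_distrib, ← Finset.sum_neg_distrib]
  refine Finset.sum_congr rfl fun k hk => ?_
  rw [Finset.sum_congr rfl fun j hj => hpair k (Finset.mem_range.1 hk) j (Finset.mem_range.1 hj)]
  simp only [sub_self, abs_zero, neg_zero, Real.exp_zero, zero_mul, Finset.sum_neg_distrib,
    ← Finset.mul_sum]
  ring

theorem stmt_5_general (N : ℕ) (x w v : ℕ → ℝ)
    (hx : ∀ i j, i < j → j < N → x i < x j) :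
    Wron N x w v 0 = 1 ∧
    -deriv (Wron N x w v) 0 = ((∑ n ∈ Finset.range N, w n : ℝ) : ℂ) ∧
    -deriv (deriv (Wron N x w v)) 0 =
      ((∑ n ∈ Finset.range N, ∑ k ∈ Finset.range N,
          (Real.exp (-|x n - x k|) - 1) * w n * w k
        + 2 * ∑ n ∈ Finset.range N, v n : ℝ) : ℂ) := by
  have hW : Wron N x w v = fun z => (solCoeffs x w v N).1.eval z :=
    funext (Wron_eq_eval_solCoeffs N x w v)
  refine ⟨?_, ?_, ?_⟩
  · rw [Wron_eq_eval_solCoeffs, ← coeff_zero_eq_eval_zero, solCoeffs_fst_coeff_zero]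
  · rw [hW, Polynomial.deriv_eval_zero, solCoeffs_fst_coeff_one, neg_neg]
  · rw [hW, Polynomial.deriv_deriv_eval_zero, solCoeffs_fst_coeff_two,
      sum_exp_neg_abs_sub_mul_add N x w v hx]
    push_cast
    ring

/-- `W(0) = 1`, `-W'(0) = Σ ω_n` and
`-W''(0) = Σ_n Σ_k (e^{-|x_n - x_k|} - 1) ω_n ω_k + 2 Σ_n υ_n`. -/
theorem stmt_5 (N : ℕ) (hN : 1 ≤ N) (x w v : ℕ → ℝ)
    (hx : ∀ i j, i < j → j < N → x i < x j)
    (hv : ∀ n, n < N → 0 ≤ v n) (hnd : ∀ n, n < N → 0 < |w n| + v n) :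
    Wron N x w v 0 = 1 ∧
    -deriv (Wron N x w v) 0 = ((∑ n ∈ Finset.range N, w n : ℝ) : ℂ) ∧
    -deriv (deriv (Wron N x w v)) 0 =
      ((∑ n ∈ Finset.range N, ∑ k ∈ Finset.range N,
          (Real.exp (-|x n - x k|) - 1) * w n * w k
        + 2 * ∑ n ∈ Finset.range N, v n : ℝ) : ℂ) :=
  stmt_5_general N x w v hx
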